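/- Suppose r, s ∈ ℂ⁴ satisfy: f_r = u²·u′ for independent linear forms u = u₁y−u₂x and u′, and f_s(x,y) = c·(u₂y+u₁x)³ for some c ≠ 0. Then there exists an invertible h ∈ GL₂(ℂ) such that h·(0,1,0,0) = r and h·*(0,0,0,−1) = s. (Note f_{(0,1,0,0)} = −3y²x and f_{(0,0,0,−1)} = x³ form such a pair; thus the regular part Λ₂^reg of the conormal variety over the orbit C₂ is a single GL₂(ℂ)-orbit.) -/

import Mathlib

noncomputable section

open Matrix

/-- The binary cubic form `f_r(x,y) = r₀y³ − 3r₁y²x − 3r₂yx² − r₃x³` attached to `r ∈ ℂ⁴`. -/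
def fcub (r : Fin 4 → ℂ) (x y : ℂ) : ℂ :=
  r 0 * y ^ 3 - 3 * r 1 * y ^ 2 * x - 3 * r 2 * y * x ^ 2 - r 3 * x ^ 3

/-- The 4×4 matrix `M(h)` for `h = [[a,b],[c,d]]`. -/
def Mmat (a b c d : ℂ) : Matrix (Fin 4) (Fin 4) ℂ :=
  !![d ^ 3, -3 * c * d ^ 2, -3 * c ^ 2 * d, -c ^ 3;
     -b * d ^ 2, d * (a * d + 2 * b * c), c * (2 * a * d + b * c), a * c ^ 2;
     -b ^ 2 * d, b * (2 * a * d + b * c), a * (a * d + 2 * b * c), a ^ 2 * c;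
     -b ^ 3, 3 * a * b ^ 2, 3 * a ^ 2 * b, a ^ 3]

/-- The action `h·r := (ad−bc)⁻¹ · M(h) · r` of `GL₂(ℂ)` on `ℂ⁴`. -/
def act (a b c d : ℂ) (r : Fin 4 → ℂ) : Fin 4 → ℂ :=
  (a * d - b * c)⁻¹ • (Mmat a b c d).mulVec r

/-- Matrix form of `Mmat`. -/
def MmatM (h : Matrix (Fin 2) (Fin 2) ℂ) : Matrix (Fin 4) (Fin 4) ℂ :=
  Mmat (h 0 0) (h 0 1) (h 1 0) (h 1 1)

/-- Matrix form of the action. -/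
def actM (h : Matrix (Fin 2) (Fin 2) ℂ) (r : Fin 4 → ℂ) : Fin 4 → ℂ :=
  act (h 0 0) (h 0 1) (h 1 0) (h 1 1) r

/-- Matrix of the dual action: the coefficients of
`(ad−bc)² · f_{h·*s}(x,y) = f_s(dx−by, ay−cx)`. -/
def Mdual (a b c d : ℂ) : Matrix (Fin 4) (Fin 4) ℂ :=
  !![a ^ 3, 3 * a ^ 2 * b, -3 * a * b ^ 2, b ^ 3;
     a ^ 2 * c, a ^ 2 * d + 2 * a * b * c, -(2 * a * b * d + b ^ 2 * c), b ^ 2 * d;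
     -a * c ^ 2, -(2 * a * c * d + b * c ^ 2), a * d ^ 2 + 2 * b * c * d, -b * d ^ 2;
     c ^ 3, 3 * c ^ 2 * d, -3 * c * d ^ 2, d ^ 3]

/-- The dual action `h·*s`: the unique vector satisfying
`fcub (dualAct a b c d s) x y = ((a*d−b*c)²)⁻¹ * fcub s (d*x−b*y) (a*y−c*x)`. -/
def dualAct (a b c d : ℂ) (s : Fin 4 → ℂ) : Fin 4 → ℂ :=
  ((a * d - b * c) ^ 2)⁻¹ • (Mdual a b c d).mulVec s

/-- Matrix form of the dual action. -/
def dualActM (h : Matrix (Fin 2) (Fin 2) ℂ) (s : Fin 4 → ℂ) : Fin 4 → ℂ :=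
  dualAct (h 0 0) (h 0 1) (h 1 0) (h 1 1) s

/-- The linear form `u₁y − u₂x` attached to `u = (u₁,u₂) ∈ ℂ²`. -/
def linForm (u : ℂ × ℂ) (x y : ℂ) : ℂ := u.1 * y - u.2 * x

/-- Two linear forms are independent if `u₁u₂′ − u₂u₁′ ≠ 0`. -/
def indepLF (u v : ℂ × ℂ) : Prop := u.1 * v.2 - u.2 * v.1 ≠ 0

/-- `d₀(r) = −9(r₀r₂ + r₁²)`. -/
def dd0 (r : Fin 4 → ℂ) : ℂ := -9 * (r 0 * r 2 + r 1 ^ 2)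

/-- `d₁(r) = −9(r₀r₃ + r₁r₂)`. -/
def dd1 (r : Fin 4 → ℂ) : ℂ := -9 * (r 0 * r 3 + r 1 * r 2)

/-- `d₂(r) = 9(r₁r₃ − r₂²)`. -/
def dd2 (r : Fin 4 → ℂ) : ℂ := 9 * (r 1 * r 3 - r 2 ^ 2)

/-- The quadratic form `Δ_r(x,y) = d₀(r)y² + d₁(r)xy + d₂(r)x²`. -/
def Δform (r : Fin 4 → ℂ) (x y : ℂ) : ℂ := dd0 r * y ^ 2 + dd1 r * x * y + dd2 r * x ^ 2

/-- The discriminant `D_r = d₁(r)² − 4d₀(r)d₂(r)`. -/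
def Ddisc (r : Fin 4 → ℂ) : ℂ := dd1 r ^ 2 - 4 * dd0 r * dd2 r

/-- The pairing `⟨r,s⟩ = r₀s₀ + 3r₁s₁ + 3r₂s₂ + r₃s₃`. -/
def pairK (r s : Fin 4 → ℂ) : ℂ := r 0 * s 0 + 3 * r 1 * s 1 + 3 * r 2 * s 2 + r 3 * s 3

/-- The Hessian matrix of `f_r` evaluated at `(x,y)`. -/
def HessM (r : Fin 4 → ℂ) (x y : ℂ) : Matrix (Fin 2) (Fin 2) ℂ :=
  !![6 * r 0 * y - 6 * r 1 * x, -6 * r 1 * y - 6 * r 2 * x;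
     -6 * r 1 * y - 6 * r 2 * x, -6 * r 2 * y - 6 * r 3 * x]

/-- The moment map `[r,s]`. -/
def momentMap (r s : Fin 4 → ℂ) : Matrix (Fin 2) (Fin 2) ℂ :=
  !![r 0 * s 0 + 2 * r 1 * s 1 + r 2 * s 2, -(r 1 * s 0) + 2 * r 2 * s 1 + r 3 * s 2;
     -(r 0 * s 1) + 2 * r 1 * s 2 + r 2 * s 3, r 1 * s 1 + 2 * r 2 * s 2 + r 3 * s 3]

/-!
In terms of cubic forms both actions are substitutions:
`f_{h·r}(x,y) = (ad−bc)⁻¹ f_r(ax+cy, bx+dy)` and `f_{h·*s}(x,y) = (ad−bc)⁻² f_s(dx−by, ay−cx)`,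
and a cubic form determines its coefficients. Since `f_{(0,1,0,0)} = −3y²x`, the matrix `h` has
to send `y` to `λu` and `x` to `νu′`, i.e. `(a,b,c,d) = (−νu′₂, −λu₂, νu′₁, λu₁)`, with
determinant `−λνΔ` where `Δ = u₁u′₂ − u₂u′₁ ≠ 0`. Matching `f_r` forces `λ = Δ/3`; the dual
form is then `(λνΔ)⁻² λ³ (u₂y+u₁x)³`, which is `c(u₂y+u₁x)³` exactly when `ν² = (3cΔ)⁻¹`.
-/

theorem fcub_injective : Function.Injective fcub := by
  intro r r' h
  have e (x y : ℂ) : fcub r x y = fcub r' x y := congrFun (congrFun h x) y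
  have e₁ := e 0 1
  have e₂ := e 1 0
  have e₃ := e 1 1
  have e₄ := e (-1) 1
  simp only [fcub] at e₁ e₂ e₃ e₄
  funext i
  fin_cases i <;> dsimp
  · linear_combination e₁
  · linear_combination (e₄ - e₃) / 6 + e₂ / 3
  · linear_combination -(e₃ + e₄) / 6 + e₁ / 3
  · linear_combination -e₂

theorem fcub_act (a b c d : ℂ) (r : Fin 4 → ℂ) (x y : ℂ) :
    fcub (act a b c d r) x y = (a * d - b * c)⁻¹ * fcub r (a * x + c * y) (b * x + d * y) := by
  simp only [fcub, act, Mmat, cons_mulVec, dotProduct, Fin.sum_univ_four, cons_val_zero,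
    cons_val_one, cons_val, empty_mulVec, Pi.smul_apply, smul_eq_mul]
  ring

theorem fcub_dualAct (a b c d : ℂ) (s : Fin 4 → ℂ) (x y : ℂ) :
    fcub (dualAct a b c d s) x y =
      ((a * d - b * c) ^ 2)⁻¹ * fcub s (d * x - b * y) (a * y - c * x) := by
  simp only [fcub, dualAct, Mdual, cons_mulVec, dotProduct, Fin.sum_univ_four, cons_val_zero,
    cons_val_one, cons_val, empty_mulVec, Pi.smul_apply, smul_eq_mul]
  ring

/-- the regular part of the conormal variety over the orbit `C₂` is a
single `GL₂(ℂ)`-orbit, with base point `(c₂, c₂^*) = ((0,1,0,0), (0,0,0,−1))`. -/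
theorem stmt15 (r s : Fin 4 → ℂ) (u u' : ℂ × ℂ) (huu' : indepLF u u') (c : ℂ) (hc : c ≠ 0)
    (hr : ∀ x y : ℂ, fcub r x y = (linForm u x y) ^ 2 * linForm u' x y)
    (hs : ∀ x y : ℂ, fcub s x y = c * (u.2 * y + u.1 * x) ^ 3) :
    ∃ a b c' d : ℂ, a * d - b * c' ≠ 0 ∧
      act a b c' d ![0, 1, 0, 0] = r ∧ dualAct a b c' d ![0, 0, 0, -1] = s := by
  set Δ := u.1 * u'.2 - u.2 * u'.1
  have hΔ : Δ ≠ 0 := huu'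
  obtain ⟨ν, hν⟩ := IsAlgClosed.exists_pow_nat_eq (3 * c * Δ)⁻¹ two_pos
  replace hν : ν ^ 2 * (3 * c * Δ) = 1 := by rw [hν]; exact inv_mul_cancel₀ (by simp [hc, hΔ])
  have hν0 : ν ≠ 0 := by rintro rfl; simp at hν
  have hdet : -ν * u'.2 * (Δ / 3 * u.1) - -(Δ / 3) * u.2 * (ν * u'.1) = -(ν * Δ ^ 2 / 3) := by
    ring
  refine ⟨-ν * u'.2, -(Δ / 3) * u.2, ν * u'.1, Δ / 3 * u.1, ?_, fcub_injective ?_,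
    fcub_injective ?_⟩
  · rw [hdet]; simp [hν0, hΔ]
  · funext x y
    rw [fcub_act, hdet, hr]
    simp only [fcub, linForm, cons_val]
    field_simp
    ring
  · funext x y
    rw [fcub_dualAct, hdet, hs]
    simp only [fcub, cons_val]
    field_simp
    linear_combination (-Δ ^ 3 * (y * u.2 + x * u.1) ^ 3) * hν

end
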